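/- arXiv:math/0501438 — 2 statements merged into one kernel-verified Lean document; each statement's English description precedes it below -/
import Mathlib

section
/- Let L be a lattice. If L has an interval [a, b] with a < b that is a distributive lattice, then L has a proper congruence-preserving extension; that is, there exist a lattice K and a non-surjective lattice embedding f : L → K such that for every congruence Θ of L there is exactly one congruence Φ of K with Φ(f x, f y) ↔ Θ(x, y) for all x, y ∈ L. -/
universe u

/-- A *congruence* of a lattice: an equivalence relation compatible with
joins and meets. -/
def IsLatticeCongruence {α : Type*} [Lattice α] (Θ : α → α → Prop) : Prop :=
  Equivalence Θ ∧
    ∀ a b c d : α, Θ a b → Θ c d → Θ (a ⊔ c) (b ⊔ d) ∧ Θ (a ⊓ c) (b ⊓ d)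

/-! The extension glues to `L`, along `x ↦ (x, a, a)`, the balanced triples `(x, y, z)`
(`x ⊓ y = x ⊓ z = y ⊓ z`) with `a ≤ x` and `y, z ∈ [a, b]`, as in Schmidt's `M₃[D]`. Meets are
componentwise; a join outside the copy of `L` is the least balanced triple above the
componentwise join, and it is again in the extension because `[a, b]` is distributive. A congruence `Θ` of `L` extends
componentwise, since that closure is a lattice polynomial in the coordinates. The extension is
unique because, with the constants `(a, b, a)` and `(a, a, b)`, each coordinate of an element is
a lattice polynomial in the element and the copy of `L`, and each balanced triple is a polynomial
in the copies of its coordinates. -/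

open Set

namespace IsLatticeCongruence

variable {α : Type*} [Lattice α] {Θ : α → α → Prop}

theorem sup (hΘ : IsLatticeCongruence Θ) {x x' y y' : α} (hx : Θ x x') (hy : Θ y y') :
    Θ (x ⊔ y) (x' ⊔ y') :=
  (hΘ.2 _ _ _ _ hx hy).1

theorem inf (hΘ : IsLatticeCongruence Θ) {x x' y y' : α} (hx : Θ x x') (hy : Θ y y') :
    Θ (x ⊓ y) (x' ⊓ y') :=
  (hΘ.2 _ _ _ _ hx hy).2

theorem sup_right (hΘ : IsLatticeCongruence Θ) {x y : α} (h : Θ x y) (c : α) :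
    Θ (x ⊔ c) (y ⊔ c) :=
  hΘ.sup h (hΘ.1.refl c)

theorem inf_right (hΘ : IsLatticeCongruence Θ) {x y : α} (h : Θ x y) (c : α) :
    Θ (x ⊓ c) (y ⊓ c) :=
  hΘ.inf h (hΘ.1.refl c)

theorem rel_sup_of_rel_of_le (hΘ : IsLatticeCongruence Θ) {x y a : α} (h : Θ x y)
    (ha : a ≤ y) : Θ x (x ⊔ a) := by
  have h' : Θ (x ⊔ a) y := by simpa [ha] using hΘ.sup_right h a
  exact hΘ.1.trans h (hΘ.1.symm h')

end IsLatticeCongruence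

def tripleRel {α : Type*} (Θ : α → α → Prop) (p q : α × α × α) : Prop :=
  Θ p.1 q.1 ∧ Θ p.2.1 q.2.1 ∧ Θ p.2.2 q.2.2

theorem IsLatticeCongruence.tripleRel {α : Type*} [Lattice α] {Θ : α → α → Prop}
    (hΘ : IsLatticeCongruence Θ) : IsLatticeCongruence (tripleRel Θ) :=
  ⟨⟨fun _ => ⟨hΘ.1.refl _, hΘ.1.refl _, hΘ.1.refl _⟩,
    fun h => ⟨hΘ.1.symm h.1, hΘ.1.symm h.2.1, hΘ.1.symm h.2.2⟩,
    fun h h' => ⟨hΘ.1.trans h.1 h'.1, hΘ.1.trans h.2.1 h'.2.1, hΘ.1.trans h.2.2 h'.2.2⟩⟩,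
   fun _ _ _ _ h h' =>
    ⟨⟨hΘ.sup h.1 h'.1, hΘ.sup h.2.1 h'.2.1, hΘ.sup h.2.2 h'.2.2⟩,
     ⟨hΘ.inf h.1 h'.1, hΘ.inf h.2.1 h'.2.1, hΘ.inf h.2.2 h'.2.2⟩⟩⟩

variable {L : Type u} [Lattice L] {a b : L}

def IsDistribInterval (a b : L) : Prop :=
  ∀ x ∈ Icc a b, ∀ y ∈ Icc a b, ∀ z ∈ Icc a b, x ⊓ (y ⊔ z) = (x ⊓ y) ⊔ (x ⊓ z)

/-- As `y ⊔ w ≤ b`, this is distributivity of `[a, b]` at `x ⊓ b`. -/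
theorem IsDistribInterval.inf_sup_of_le (hd : IsDistribInterval a b) {x y w : L} (hx : a ≤ x)
    (hy : y ∈ Icc a b) (hw : w ∈ Icc a b) : x ⊓ (y ⊔ w) = x ⊓ y ⊔ x ⊓ w := by
  have hxb : x ⊓ b ∈ Icc a b := ⟨le_inf hx (hy.1.trans hy.2), inf_le_right⟩
  calc x ⊓ (y ⊔ w) = x ⊓ b ⊓ (y ⊔ w) := by rw [inf_assoc, inf_eq_right.2 (sup_le hy.2 hw.2)]
    _ = x ⊓ b ⊓ y ⊔ x ⊓ b ⊓ w := hd _ hxb _ hy _ hw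
    _ = x ⊓ y ⊔ x ⊓ w := by rw [inf_assoc, inf_assoc, inf_eq_right.2 hy.2, inf_eq_right.2 hw.2]

namespace CongruenceExtension

def IsBalanced (p : L × L × L) : Prop :=
  p.1 ⊓ p.2.1 = p.2.1 ⊓ p.2.2 ∧ p.1 ⊓ p.2.2 = p.2.1 ⊓ p.2.2

theorem IsBalanced.inf {p q : L × L × L} (hp : IsBalanced p) (hq : IsBalanced q) :
    IsBalanced (p ⊓ q) := by
  constructor
  · change p.1 ⊓ q.1 ⊓ (p.2.1 ⊓ q.2.1) = p.2.1 ⊓ q.2.1 ⊓ (p.2.2 ⊓ q.2.2)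
    rw [inf_inf_inf_comm, hp.1, hq.1, inf_inf_inf_comm]
  · change p.1 ⊓ q.1 ⊓ (p.2.2 ⊓ q.2.2) = p.2.1 ⊓ q.2.1 ⊓ (p.2.2 ⊓ q.2.2)
    rw [inf_inf_inf_comm, hp.2, hq.2, inf_inf_inf_comm]

def balancedClosure (p : L × L × L) : L × L × L :=
  (p.1 ⊔ p.2.1 ⊓ p.2.2, p.2.1 ⊔ (p.1 ⊔ p.2.1 ⊓ p.2.2) ⊓ p.2.2,
    p.2.2 ⊔ (p.1 ⊔ p.2.1 ⊓ p.2.2) ⊓ p.2.1)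

theorem le_balancedClosure (p : L × L × L) : p ≤ balancedClosure p :=
  ⟨le_sup_left, le_sup_left, le_sup_left⟩

theorem balancedClosure_le {p q : L × L × L} (hq : IsBalanced q) (h : p ≤ q) :
    balancedClosure p ≤ q := by
  obtain ⟨hx, hy, hz⟩ : p.1 ≤ q.1 ∧ p.2.1 ≤ q.2.1 ∧ p.2.2 ≤ q.2.2 := ⟨h.1, h.2.1, h.2.2⟩
  have hx' : p.1 ⊔ p.2.1 ⊓ p.2.2 ≤ q.1 :=
    sup_le hx ((inf_le_inf hy hz).trans (hq.1 ▸ inf_le_left))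
  exact ⟨hx', sup_le hy ((inf_le_inf hx' hz).trans (hq.2 ▸ inf_le_left)),
    sup_le hz ((inf_le_inf hx' hy).trans (hq.1 ▸ inf_le_right))⟩

theorem isBalanced_balancedClosure (hd : IsDistribInterval a b)
    {p : L × L × L} (hy : p.2.1 ∈ Icc a b) (hz : p.2.2 ∈ Icc a b) :
    IsBalanced (balancedClosure p) := by
  obtain ⟨x, y, z⟩ := p
  set x' := x ⊔ y ⊓ z
  have hx' : a ≤ x' := le_sup_of_le_right (le_inf hy.1 hz.1)
  have hyz : y ⊓ z ≤ x' ⊓ z := le_inf le_sup_right inf_le_right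
  have mem : ∀ {w}, w ∈ Icc a b → x' ⊓ w ∈ Icc a b :=
    fun hw => ⟨le_inf hx' hw.1, inf_le_of_right_le hw.2⟩
  have hY : x' ⊓ (y ⊔ x' ⊓ z) = x' ⊓ y ⊔ x' ⊓ z := by
    rw [hd.inf_sup_of_le hx' hy (mem hz), inf_left_idem]
  have hZ : x' ⊓ (z ⊔ x' ⊓ y) = x' ⊓ y ⊔ x' ⊓ z := by
    rw [hd.inf_sup_of_le hx' hz (mem hy), inf_left_idem, sup_comm]
  have hYZ : (y ⊔ x' ⊓ z) ⊓ (z ⊔ x' ⊓ y) = x' ⊓ y ⊔ x' ⊓ z := by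
    have hyd : y ⊔ x' ⊓ z ∈ Icc a b := ⟨le_sup_of_le_left hy.1, sup_le hy.2 (mem hz).2⟩
    calc (y ⊔ x' ⊓ z) ⊓ (z ⊔ x' ⊓ y)
        = z ⊓ (y ⊔ x' ⊓ z) ⊔ (y ⊔ x' ⊓ z) ⊓ (x' ⊓ y) := by
          rw [hd.inf_sup_of_le hyd.1 hz (mem hy), inf_comm]
      _ = y ⊓ z ⊔ x' ⊓ z ⊔ x' ⊓ y := by
          rw [hd.inf_sup_of_le hz.1 hy (mem hz), inf_comm z y, inf_eq_right.2 inf_le_right,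
            inf_eq_right.2 (inf_le_right.trans le_sup_left)]
      _ = x' ⊓ y ⊔ x' ⊓ z := by
          rw [sup_eq_right.2 hyz, sup_comm]
  exact ⟨hY.trans hYZ.symm, hZ.trans hYZ.symm⟩

def extCarrier (a b : L) : Set (L × L × L) :=
  {p | p.2.1 ∈ Icc a b ∧ p.2.2 ∈ Icc a b ∧ (p.2 = (a, a) ∨ a ≤ p.1 ∧ IsBalanced p)}

theorem inf_mem_extCarrier {p q : L × L × L} (hp : p ∈ extCarrier a b)
    (hq : q ∈ extCarrier a b) : p ⊓ q ∈ extCarrier a b := by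
  refine ⟨⟨le_inf hp.1.1 hq.1.1, inf_le_of_left_le hp.1.2⟩,
    ⟨le_inf hp.2.1.1 hq.2.1.1, inf_le_of_left_le hp.2.1.2⟩, ?_⟩
  rcases hp.2.2 with hpa | ⟨hpx, hpb⟩
  · exact Or.inl (by rw [Prod.snd_inf, hpa]; exact inf_eq_left.2 ⟨hq.1.1, hq.2.1.1⟩)
  rcases hq.2.2 with hqa | ⟨hqx, hqb⟩
  · exact Or.inl (by rw [Prod.snd_inf, hqa]; exact inf_eq_right.2 ⟨hp.1.1, hp.2.1.1⟩)
  exact Or.inr ⟨le_inf hpx hqx, hpb.inf hqb⟩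

open Classical in
noncomputable def extJoin (a : L) (p : L × L × L) : L × L × L :=
  if p.2 = (a, a) then p else balancedClosure p

theorem extJoin_of_snd_eq {p : L × L × L} (h : p.2 = (a, a)) : extJoin a p = p := if_pos h

theorem extJoin_of_snd_ne {p : L × L × L} (h : p.2 ≠ (a, a)) :
    extJoin a p = balancedClosure p := if_neg h

theorem le_extJoin (a : L) (p : L × L × L) : p ≤ extJoin a p := by
  unfold extJoin; split_ifs
  exacts [le_rfl, le_balancedClosure p]

theorem extJoin_le {p q : L × L × L} (hp : (a, a) ≤ p.2) (hq : q ∈ extCarrier a b)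
    (h : p ≤ q) : extJoin a p ≤ q := by
  by_cases hpa : p.2 = (a, a)
  · rwa [extJoin_of_snd_eq hpa]
  rw [extJoin_of_snd_ne hpa]
  obtain ⟨-, -, hqa | ⟨-, hqb⟩⟩ := hq
  · exact absurd (le_antisymm (hqa ▸ h.2) hp) hpa
  · exact balancedClosure_le hqb h

theorem extJoin_mem (hd : IsDistribInterval a b) {p : L × L × L} (hy : p.2.1 ∈ Icc a b)
    (hz : p.2.2 ∈ Icc a b) : extJoin a p ∈ extCarrier a b := by
  by_cases hpa : p.2 = (a, a)
  · rw [extJoin_of_snd_eq hpa]; exact ⟨hy, hz, Or.inl hpa⟩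
  rw [extJoin_of_snd_ne hpa]
  have hx : a ≤ p.1 ⊔ p.2.1 ⊓ p.2.2 := le_sup_of_le_right (le_inf hy.1 hz.1)
  exact ⟨⟨le_sup_of_le_left hy.1, sup_le hy.2 (inf_le_of_right_le hz.2)⟩,
    ⟨le_sup_of_le_left hz.1, sup_le hz.2 (inf_le_of_right_le hy.2)⟩,
    Or.inr ⟨hx, isBalanced_balancedClosure hd hy hz⟩⟩

theorem le_fst_of_mem_extCarrier {p : L × L × L} (hp : p ∈ extCarrier a b)
    (h : p.2 ≠ (a, a)) : a ≤ p.1 :=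
  (hp.2.2.resolve_left h).1

theorem le_fst_sup_of_mem_extCarrier {p q : L × L × L} (hp : p ∈ extCarrier a b)
    (hq : q ∈ extCarrier a b) (h : (p ⊔ q).2 ≠ (a, a)) : a ≤ (p ⊔ q).1 := by
  by_cases hpa : p.2 = (a, a)
  · have hqa : q.2 ≠ (a, a) := fun hqa => h (by rw [Prod.snd_sup, hpa, hqa, sup_idem])
    exact le_sup_of_le_right (le_fst_of_mem_extCarrier hq hqa)
  · exact le_sup_of_le_left (le_fst_of_mem_extCarrier hp hpa)

abbrev Ext (a b : L) : Type u := extCarrier a b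

namespace Ext

variable [hd : Fact (IsDistribInterval a b)]

noncomputable instance : Lattice (Ext a b) :=
  { Subtype.partialOrder _ with
    sup := fun u v => ⟨extJoin a (u.1 ⊔ v.1), extJoin_mem hd.out
      ⟨le_sup_of_le_left u.2.1.1, sup_le u.2.1.2 v.2.1.2⟩
      ⟨le_sup_of_le_left u.2.2.1.1, sup_le u.2.2.1.2 v.2.2.1.2⟩⟩
    le_sup_left := fun u v => le_sup_left.trans (le_extJoin a (u.1 ⊔ v.1))
    le_sup_right := fun u v => le_sup_right.trans (le_extJoin a (u.1 ⊔ v.1))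
    sup_le := fun u _ w hu hv =>
      extJoin_le ⟨le_sup_of_le_left u.2.1.1, le_sup_of_le_left u.2.2.1.1⟩ w.2 (sup_le hu hv)
    inf := fun u v => ⟨u.1 ⊓ v.1, inf_mem_extCarrier u.2 v.2⟩
    inf_le_left := fun u v => (inf_le_left : u.1 ⊓ v.1 ≤ u.1)
    inf_le_right := fun u v => (inf_le_right : u.1 ⊓ v.1 ≤ v.1)
    le_inf := fun u v w hv hw => (le_inf hv hw : u.1 ≤ v.1 ⊓ w.1) }

theorem coe_sup (u v : Ext a b) : (u ⊔ v).1 = extJoin a (u.1 ⊔ v.1) := rfl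

theorem coe_inf (u v : Ext a b) : (u ⊓ v).1 = u.1 ⊓ v.1 := rfl

end Ext

section Congruence

variable {Θ : L → L → Prop}

theorem tripleRel_balancedClosure (hΘ : IsLatticeCongruence Θ) {p q : L × L × L}
    (h : tripleRel Θ p q) : tripleRel Θ (balancedClosure p) (balancedClosure q) := by
  obtain ⟨hx, hy, hz⟩ := h
  have hx' := hΘ.sup hx (hΘ.inf hy hz)
  exact ⟨hx', hΘ.sup hy (hΘ.inf hx' hz), hΘ.sup hz (hΘ.inf hx' hy)⟩

theorem tripleRel_self_balancedClosure (hΘ : IsLatticeCongruence Θ) {p : L × L × L}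
    (hp : p.2 = (a, a)) (hx : Θ p.1 (p.1 ⊔ a)) : tripleRel Θ p (balancedClosure p) := by
  obtain ⟨x, y, z⟩ := p
  obtain ⟨rfl, rfl⟩ : y = a ∧ z = a := Prod.ext_iff.1 hp
  simpa [tripleRel, balancedClosure] using ⟨hx, hΘ.1.refl _⟩

/-- When only one side is replaced by its balanced closure, the other side is `(x, a, a)` with
`x` congruent to some `x' ≥ a`, hence to `x ⊔ a`. -/
theorem tripleRel_extJoin (hΘ : IsLatticeCongruence Θ) {p q : L × L × L}
    (hp : p.2 ≠ (a, a) → a ≤ p.1) (hq : q.2 ≠ (a, a) → a ≤ q.1) (h : tripleRel Θ p q) :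
    tripleRel Θ (extJoin a p) (extJoin a q) := by
  have hT := hΘ.tripleRel
  by_cases hpa : p.2 = (a, a) <;> by_cases hqa : q.2 = (a, a)
  · rwa [extJoin_of_snd_eq hpa, extJoin_of_snd_eq hqa]
  · rw [extJoin_of_snd_eq hpa, extJoin_of_snd_ne hqa]
    exact hT.1.trans (tripleRel_self_balancedClosure hΘ hpa (hΘ.rel_sup_of_rel_of_le h.1 (hq hqa)))
      (tripleRel_balancedClosure hΘ h)
  · rw [extJoin_of_snd_ne hpa, extJoin_of_snd_eq hqa]
    refine hT.1.trans (tripleRel_balancedClosure hΘ h) (hT.1.symm ?_)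
    exact tripleRel_self_balancedClosure hΘ hqa (hΘ.rel_sup_of_rel_of_le (hΘ.1.symm h.1) (hp hpa))
  · rw [extJoin_of_snd_ne hpa, extJoin_of_snd_ne hqa]
    exact tripleRel_balancedClosure hΘ h

variable [Fact (IsDistribInterval a b)]

theorem Ext.isLatticeCongruence_tripleRel (hΘ : IsLatticeCongruence Θ) :
    IsLatticeCongruence fun u v : Ext a b => tripleRel Θ u.1 v.1 := by
  refine ⟨hΘ.tripleRel.1.comap Subtype.val, fun u v u' v' h h' => ⟨?_, hΘ.tripleRel.inf h h'⟩⟩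
  exact tripleRel_extJoin hΘ (le_fst_sup_of_mem_extCarrier u.2 u'.2)
    (le_fst_sup_of_mem_extCarrier v.2 v'.2) (hΘ.tripleRel.sup h h')

end Congruence

namespace Ext

def embed (hab : a ≤ b) (x : L) : Ext a b :=
  ⟨(x, a, a), ⟨le_rfl, hab⟩, ⟨le_rfl, hab⟩, Or.inl rfl⟩

def yTop (hab : a ≤ b) : Ext a b :=
  ⟨(a, b, a), ⟨hab, le_rfl⟩, ⟨le_rfl, hab⟩, Or.inr ⟨le_rfl, by simp [IsBalanced, hab]⟩⟩

def zTop (hab : a ≤ b) : Ext a b :=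
  ⟨(a, a, b), ⟨le_rfl, hab⟩, ⟨hab, le_rfl⟩, Or.inr ⟨le_rfl, by simp [IsBalanced, hab]⟩⟩

theorem embed_injective (hab : a ≤ b) : Function.Injective (embed hab) :=
  fun _ _ h => congrArg (fun u => u.1.1) h

theorem yTop_notMem_range_embed (hab : a < b) : yTop hab.le ∉ range (embed hab.le) :=
  fun ⟨_, h⟩ => hab.ne (congrArg (fun u => u.1.2.1) h)

theorem eq_embed_or_isBalanced (hab : a ≤ b) (u : Ext a b) :
    u = embed hab u.1.1 ∨ a ≤ u.1.1 ∧ IsBalanced u.1 :=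
  u.2.2.2.imp_left fun h => Subtype.ext (Prod.ext rfl h)

variable [Fact (IsDistribInterval a b)]

theorem embed_sup (hab : a ≤ b) (x y : L) : embed hab (x ⊔ y) = embed hab x ⊔ embed hab y :=
  Subtype.ext <| by rw [coe_sup, extJoin_of_snd_eq] <;> simp [embed]

theorem embed_inf (hab : a ≤ b) (x y : L) : embed hab (x ⊓ y) = embed hab x ⊓ embed hab y :=
  Subtype.ext <| by simp [embed, coe_inf]

theorem inf_embed_of_fst_le (hab : a ≤ b) (u : Ext a b) {c : L} (h : u.1.1 ≤ c) :
    u ⊓ embed hab c = embed hab u.1.1 :=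
  Subtype.ext <| Prod.ext (inf_eq_left.2 h)
    (Prod.ext (inf_eq_right.2 u.2.1.1) (inf_eq_right.2 u.2.2.1.1))

theorem coe_embed_sup_zTop (hab : a < b) {y : L} (hy : y ∈ Icc a b) :
    (embed hab.le y ⊔ zTop hab.le).1 = (y, y, b) := by
  rw [coe_sup, extJoin_of_snd_ne (by simp [embed, zTop, hab.not_ge])]
  simp [embed, zTop, balancedClosure, hy.1, hy.2, hab.le]

theorem coe_embed_sup_yTop (hab : a < b) {z : L} (hz : z ∈ Icc a b) :
    (embed hab.le z ⊔ yTop hab.le).1 = (z, b, z) := by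
  rw [coe_sup, extJoin_of_snd_ne (by simp [embed, yTop, hab.not_ge])]
  simp [embed, yTop, balancedClosure, hz.1, hz.2, hab.le]

theorem inf_yTop_sup_zTop_inf_embed (hab : a < b) (u : Ext a b) :
    (u ⊓ yTop hab.le ⊔ zTop hab.le) ⊓ embed hab.le b = embed hab.le u.1.2.1 := by
  obtain ⟨⟨x, y, z⟩, ⟨hay, hyb⟩, ⟨haz, -⟩, -⟩ := u
  dsimp only at hay hyb haz
  apply Subtype.ext
  rw [coe_inf, coe_sup, extJoin_of_snd_ne (by simp [coe_inf, yTop, zTop, hyb, haz, hab.not_ge])]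
  simp [embed, yTop, zTop, coe_inf, balancedClosure, hay, hyb, haz, hab.le]

theorem inf_zTop_sup_yTop_inf_embed (hab : a < b) (u : Ext a b) :
    (u ⊓ zTop hab.le ⊔ yTop hab.le) ⊓ embed hab.le b = embed hab.le u.1.2.2 := by
  obtain ⟨⟨x, y, z⟩, ⟨hay, -⟩, ⟨haz, hzb⟩, -⟩ := u
  dsimp only at hay haz hzb
  apply Subtype.ext
  rw [coe_inf, coe_sup, extJoin_of_snd_ne (by simp [coe_inf, yTop, zTop, hzb, hay, hab.not_ge])]
  simp [embed, yTop, zTop, coe_inf, balancedClosure, hay, haz, hzb, hab.le]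

theorem eq_embed_sup_of_isBalanced (hab : a < b) (u : Ext a b) (hu : IsBalanced u.1) :
    u = embed hab.le u.1.1 ⊔
      (embed hab.le u.1.2.1 ⊔ zTop hab.le) ⊓ (embed hab.le u.1.2.2 ⊔ yTop hab.le) := by
  set w := (embed hab.le u.1.2.1 ⊔ zTop hab.le) ⊓ (embed hab.le u.1.2.2 ⊔ yTop hab.le)
  have hw : w.1 = (u.1.2.1 ⊓ u.1.2.2, u.1.2.1, u.1.2.2) := by
    rw [coe_inf, coe_embed_sup_zTop hab u.2.1, coe_embed_sup_yTop hab u.2.2.1]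
    simp [u.2.1.2, u.2.2.1.2]
  refine le_antisymm ?_ (sup_le ⟨le_rfl, u.2.1.1, u.2.2.1.1⟩ ?_)
  · have hxle : u.1.1 ≤ _ := (le_sup_left : embed hab.le u.1.1 ≤ _ ⊔ w).1
    have hwle : w.1 ≤ _ := (le_sup_right : w ≤ embed hab.le u.1.1 ⊔ w)
    rw [hw] at hwle
    exact ⟨hxle, hwle.2⟩
  · change w.1 ≤ u.1
    rw [hw]
    exact ⟨hu.1 ▸ inf_le_left, le_rfl, le_rfl⟩

end Ext

section Uniqueness

open Ext

variable {Θ : L → L → Prop}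

theorem tripleRel_embed_iff (hab : a ≤ b) (hΘ : IsLatticeCongruence Θ) (x y : L) :
    tripleRel Θ (embed hab x).1 (embed hab y).1 ↔ Θ x y :=
  ⟨And.left, fun h => ⟨h, hΘ.1.refl a, hΘ.1.refl a⟩⟩

variable [Fact (IsDistribInterval a b)] {Φ : Ext a b → Ext a b → Prop}

theorem tripleRel_of_rel (hab : a < b) (hΦ : IsLatticeCongruence Φ)
    (hΦΘ : ∀ x y, Φ (embed hab.le x) (embed hab.le y) ↔ Θ x y) {u v : Ext a b} (h : Φ u v) :
    tripleRel Θ u.1 v.1 := by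
  have hx := hΦ.inf_right h (embed hab.le (u.1.1 ⊔ v.1.1))
  rw [inf_embed_of_fst_le hab.le u le_sup_left, inf_embed_of_fst_le hab.le v le_sup_right] at hx
  have hy := hΦ.inf_right (hΦ.sup_right (hΦ.inf_right h (yTop hab.le)) (zTop hab.le))
    (embed hab.le b)
  rw [inf_yTop_sup_zTop_inf_embed hab u, inf_yTop_sup_zTop_inf_embed hab v] at hy
  have hz := hΦ.inf_right (hΦ.sup_right (hΦ.inf_right h (zTop hab.le)) (yTop hab.le))
    (embed hab.le b)
  rw [inf_zTop_sup_yTop_inf_embed hab u, inf_zTop_sup_yTop_inf_embed hab v] at hz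
  exact ⟨(hΦΘ _ _).1 hx, (hΦΘ _ _).1 hy, (hΦΘ _ _).1 hz⟩

theorem rel_of_tripleRel_of_isBalanced (hab : a < b) (hΦ : IsLatticeCongruence Φ)
    (hΦΘ : ∀ x y, Φ (embed hab.le x) (embed hab.le y) ↔ Θ x y) {u v : Ext a b}
    (hu : IsBalanced u.1) (hv : IsBalanced v.1) (h : tripleRel Θ u.1 v.1) : Φ u v := by
  rw [eq_embed_sup_of_isBalanced hab u hu, eq_embed_sup_of_isBalanced hab v hv]
  exact hΦ.sup ((hΦΘ _ _).2 h.1)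
    (hΦ.inf (hΦ.sup_right ((hΦΘ _ _).2 h.2.1) _) (hΦ.sup_right ((hΦΘ _ _).2 h.2.2) _))

theorem rel_embed_of_isBalanced (hab : a < b) (hΘ : IsLatticeCongruence Θ)
    (hΦ : IsLatticeCongruence Φ) (hΦΘ : ∀ x y, Φ (embed hab.le x) (embed hab.le y) ↔ Θ x y)
    {x : L} {v : Ext a b} (hv : a ≤ v.1.1 ∧ IsBalanced v.1)
    (h : tripleRel Θ (embed hab.le x).1 v.1) : Φ (embed hab.le x) v := by
  have hxa : Θ x (x ⊔ a) := hΘ.rel_sup_of_rel_of_le h.1 hv.1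
  have hbal : IsBalanced (embed hab.le (x ⊔ a)).1 := by simp [IsBalanced, embed]
  exact hΦ.1.trans ((hΦΘ _ _).2 hxa) (rel_of_tripleRel_of_isBalanced hab hΦ hΦΘ hbal hv.2
    ⟨hΘ.1.trans (hΘ.1.symm hxa) h.1, h.2⟩)

theorem rel_of_tripleRel (hab : a < b) (hΘ : IsLatticeCongruence Θ)
    (hΦ : IsLatticeCongruence Φ) (hΦΘ : ∀ x y, Φ (embed hab.le x) (embed hab.le y) ↔ Θ x y)
    {u v : Ext a b} (h : tripleRel Θ u.1 v.1) : Φ u v := by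
  rcases eq_embed_or_isBalanced hab.le u with hu | hu <;>
    rcases eq_embed_or_isBalanced hab.le v with hv | hv
  · rw [hu, hv]
    exact (hΦΘ _ _).2 h.1
  · rw [hu] at h ⊢
    exact rel_embed_of_isBalanced hab hΘ hΦ hΦΘ hv h
  · rw [hv] at h ⊢
    exact hΦ.1.symm (rel_embed_of_isBalanced hab hΘ hΦ hΦΘ hu (hΘ.tripleRel.1.symm h))
  · exact rel_of_tripleRel_of_isBalanced hab hΦ hΦΘ hu.2 hv.2 h

theorem eq_tripleRel (hab : a < b) (hΘ : IsLatticeCongruence Θ) (hΦ : IsLatticeCongruence Φ)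
    (hΦΘ : ∀ x y, Φ (embed hab.le x) (embed hab.le y) ↔ Θ x y) :
    Φ = fun u v => tripleRel Θ u.1 v.1 :=
  funext₂ fun _ _ => propext ⟨tripleRel_of_rel hab hΦ hΦΘ, rel_of_tripleRel hab hΘ hΦ hΦΘ⟩

end Uniqueness

end CongruenceExtension

/-- If a lattice `L` has an interval `[a, b]` with `a < b` that is a distributive
lattice, then `L` has a proper congruence-preserving extension. -/
theorem proper_congruence_preserving_extension_of_distributive_interval
    (L : Type u) [Lattice L]
    (h : ∃ a b : L, a < b ∧
      ∀ x ∈ Set.Icc a b, ∀ y ∈ Set.Icc a b, ∀ z ∈ Set.Icc a b,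
        x ⊓ (y ⊔ z) = (x ⊓ y) ⊔ (x ⊓ z)) :
    ∃ (K : Type u) (_ : Lattice K) (f : L → K),
      Function.Injective f ∧
      (∀ x y : L, f (x ⊔ y) = f x ⊔ f y) ∧
      (∀ x y : L, f (x ⊓ y) = f x ⊓ f y) ∧
      ¬ Function.Surjective f ∧
      ∀ Θ : L → L → Prop, IsLatticeCongruence Θ →
        ∃! Φ : K → K → Prop,
          IsLatticeCongruence Φ ∧ ∀ x y : L, Φ (f x) (f y) ↔ Θ x y := by
  open CongruenceExtension Ext in
  obtain ⟨a, b, hab, hd⟩ := h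
  have : Fact (IsDistribInterval a b) := ⟨hd⟩
  refine ⟨Ext a b, inferInstance, embed hab.le, embed_injective hab.le, embed_sup hab.le,
    embed_inf hab.le, fun hs => yTop_notMem_range_embed hab (hs _), fun Θ hΘ => ?_⟩
  exact ⟨_, ⟨isLatticeCongruence_tripleRel hΘ, tripleRel_embed_iff hab.le hΘ⟩,
    fun Φ hΦ => eq_tripleRel hab hΘ hΦ.1 hΦ.2⟩
end

section
/- Every lattice L with more than one element has a proper congruence-preserving extension K in which L is an ideal; that is, there exist a lattice K and a non-surjective lattice embedding f : L → K such that (1) for every congruence Θ of L there is exactly one congruence Φ of K with Φ(f x, f y) ↔ Θ(x, y) for all x, y ∈ L, and (2) the image of f is an ideal of K (a nonempty downward-closed subset closed under binary joins). -/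
universe u

/-!
Pick `a < b` in `L` and glue `L` to `M₃[↑a]`, the lattice of Boolean triples over the filter
`↑a`, along `↑a`: an element `x` of `L` becomes `(x, a, a)`. Then `L` is an ideal not containing
`(a, b, a)`, and every congruence `Θ` of `L` extends componentwise. Conversely, in a congruence of
the glued lattice, for `a ≤ s, t` the pair `(s, a, a), (t, a, a)` is congruent exactly when
`(a, s, a), (a, t, a)` is, by perspectivity inside `M₃[↑a]`; the third axis follows by the
symmetry swapping the last two coordinates. Since every element joined with `(a, a, a)` is the
join of its three axis components, the congruence is determined by its restriction to `L`.
-/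
namespace IsLatticeCongruence

variable {α β : Type*} [Lattice α] [Lattice β] {Θ : α → α → Prop} {x y z w p : α}

theorem refl (hΘ : IsLatticeCongruence Θ) (x : α) : Θ x x := hΘ.1.refl x

theorem symm (hΘ : IsLatticeCongruence Θ) : Θ x y → Θ y x := hΘ.1.symm

theorem trans (hΘ : IsLatticeCongruence Θ) : Θ x y → Θ y z → Θ x z := hΘ.1.trans

theorem sup_s14 (hΘ : IsLatticeCongruence Θ) (hxy : Θ x y) (hzw : Θ z w) : Θ (x ⊔ z) (y ⊔ w) :=
  (hΘ.2 x y z w hxy hzw).1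

theorem inf_s14 (hΘ : IsLatticeCongruence Θ) (hxy : Θ x y) (hzw : Θ z w) : Θ (x ⊓ z) (y ⊓ w) :=
  (hΘ.2 x y z w hxy hzw).2

theorem iff_sup (hΘ : IsLatticeCongruence Θ) : Θ x y ↔ Θ x (x ⊔ y) ∧ Θ y (x ⊔ y) := by
  refine ⟨fun h => ⟨?_, ?_⟩, fun h => hΘ.trans h.1 (hΘ.symm h.2)⟩
  · simpa using hΘ.sup_s14 (hΘ.refl x) h
  · simpa using hΘ.symm (hΘ.sup_s14 h (hΘ.refl y))

theorem iff_of_inf_eq (hΘ : IsLatticeCongruence Θ) (h : p ⊓ y = x) :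
    Θ x y ↔ Θ p (p ⊔ y) := by
  refine ⟨fun hxy => ?_, fun hp => ?_⟩
  · simpa [← h] using hΘ.sup_s14 (hΘ.refl p) hxy
  · simpa [h] using hΘ.inf_s14 hp (hΘ.refl y)

theorem sup_right_of_le (hΘ : IsLatticeCongruence Θ) (hxy : Θ x y) (hpy : p ≤ y) :
    Θ x (x ⊔ p) :=
  hΘ.trans hxy (hΘ.symm (by simpa [hpy] using hΘ.sup_s14 hxy (hΘ.refl p)))

theorem comap {F : Type*} [FunLike F α β] [LatticeHomClass F α β] {Φ : β → β → Prop}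
    (hΦ : IsLatticeCongruence Φ) (f : F) : IsLatticeCongruence (fun x y => Φ (f x) (f y)) :=
  ⟨hΦ.1.comap f, fun _ _ _ _ h h' => by simpa only [map_sup, map_inf] using hΦ.2 _ _ _ _ h h'⟩

end IsLatticeCongruence

section Triples

variable {α : Type*} [Lattice α] {Θ : α → α → Prop} {t t' : α × α × α}

/-- Its closed elements are the Boolean triples of Grätzer and Schmidt, which make up `M₃[α]`. -/
def boolClosure : ClosureOperator (α × α × α) :=
  .mk' (fun t => ((t.1 ⊔ t.2.1) ⊓ (t.1 ⊔ t.2.2), (t.1 ⊔ t.2.1) ⊓ (t.2.1 ⊔ t.2.2),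
      (t.1 ⊔ t.2.2) ⊓ (t.2.1 ⊔ t.2.2)))
    (fun _ _ h => ⟨inf_le_inf (sup_le_sup h.1 h.2.1) (sup_le_sup h.1 h.2.2),
      inf_le_inf (sup_le_sup h.1 h.2.1) (sup_le_sup h.2.1 h.2.2),
      inf_le_inf (sup_le_sup h.1 h.2.2) (sup_le_sup h.2.1 h.2.2)⟩)
    (fun _ => ⟨le_inf le_sup_left le_sup_left, le_inf le_sup_right le_sup_left,
      le_inf le_sup_right le_sup_right⟩)
    (fun _ => ⟨inf_le_inf (sup_le inf_le_left inf_le_left) (sup_le inf_le_right inf_le_left),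
      inf_le_inf (sup_le inf_le_left inf_le_left) (sup_le inf_le_right inf_le_right),
      inf_le_inf (sup_le inf_le_right inf_le_left) (sup_le inf_le_right inf_le_right)⟩)

@[simp]
theorem boolClosure_mk (x y z : α) :
    boolClosure (x, y, z) = ((x ⊔ y) ⊓ (x ⊔ z), (x ⊔ y) ⊓ (y ⊔ z), (x ⊔ z) ⊓ (y ⊔ z)) := by
  rfl

theorem boolClosure_swap (t : α × α × α) :
    boolClosure (t.1, t.2.swap) = ((boolClosure t).1, (boolClosure t).2.swap) := by
  obtain ⟨x, y, z⟩ := t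
  simp [inf_comm, sup_comm]

theorem boolClosure_isClosed_swap (ht : boolClosure.IsClosed t) :
    boolClosure.IsClosed (t.1, t.2.swap) := by
  rw [ClosureOperator.isClosed_iff_closure_le, boolClosure_swap, ht.closure_eq]

def triRel (Θ : α → α → Prop) (t t' : α × α × α) : Prop :=
  Θ t.1 t'.1 ∧ Θ t.2.1 t'.2.1 ∧ Θ t.2.2 t'.2.2

theorem isLatticeCongruence_triRel (hΘ : IsLatticeCongruence Θ) :
    IsLatticeCongruence (triRel Θ) :=
  ⟨⟨fun _ => ⟨hΘ.refl _, hΘ.refl _, hΘ.refl _⟩,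
    fun h => ⟨hΘ.symm h.1, hΘ.symm h.2.1, hΘ.symm h.2.2⟩,
    fun h h' => ⟨hΘ.trans h.1 h'.1, hΘ.trans h.2.1 h'.2.1, hΘ.trans h.2.2 h'.2.2⟩⟩,
   fun _ _ _ _ h h' => ⟨⟨hΘ.sup_s14 h.1 h'.1, hΘ.sup_s14 h.2.1 h'.2.1, hΘ.sup_s14 h.2.2 h'.2.2⟩,
     ⟨hΘ.inf_s14 h.1 h'.1, hΘ.inf_s14 h.2.1 h'.2.1, hΘ.inf_s14 h.2.2 h'.2.2⟩⟩⟩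

theorem IsLatticeCongruence.triRel_boolClosure (hΘ : IsLatticeCongruence Θ)
    (h : triRel Θ t t') : triRel Θ (boolClosure t) (boolClosure t') := by
  obtain ⟨h₁, h₂, h₃⟩ := h
  exact ⟨hΘ.inf_s14 (hΘ.sup_s14 h₁ h₂) (hΘ.sup_s14 h₁ h₃), hΘ.inf_s14 (hΘ.sup_s14 h₁ h₂) (hΘ.sup_s14 h₂ h₃),
    hΘ.inf_s14 (hΘ.sup_s14 h₁ h₃) (hΘ.sup_s14 h₂ h₃)⟩

end Triples

section Glue

variable {L : Type*} [Lattice L] {a : L} {Θ : L → L → Prop} {t t' : L × L × L}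

/-- The triples encoding `L` glued to `M₃[↑a]` over `↑a`: `x ∈ L` is encoded as `(x, a, a)`,
and `M₃[↑a]` consists of the Boolean triples above `(a, a, a)`. -/
def IsGlued (a : L) (t : L × L × L) : Prop :=
  (t.2.1 = a ∧ t.2.2 = a) ∨ ((a, a, a) ≤ t ∧ boolClosure.IsClosed t)

theorem IsGlued.le_snd (h : IsGlued a t) : a ≤ t.2.1 :=
  h.elim (fun h => h.1.ge) (fun h => h.1.2.1)

theorem IsGlued.le_thd (h : IsGlued a t) : a ≤ t.2.2 :=
  h.elim (fun h => h.2.ge) (fun h => h.1.2.2)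

theorem IsGlued.eq_of_not_le (h : IsGlued a t) (ht : ¬a ≤ t.1) : t = (t.1, a, a) :=
  h.elim (fun h => Prod.ext rfl (Prod.ext h.1 h.2)) (fun h => absurd h.1.1 ht)

theorem IsGlued.swap (h : IsGlued a t) : IsGlued a (t.1, t.2.swap) :=
  h.imp (fun h => ⟨h.2, h.1⟩) (fun h => ⟨⟨h.1.1, h.1.2.2, h.1.2.1⟩, boolClosure_isClosed_swap h.2⟩)

theorem IsGlued.sup_diag (h : IsGlued a t) : IsGlued a (t ⊔ (a, a, a)) := by
  rcases h with h | h
  · exact Or.inl ⟨by simp [h.1], by simp [h.2]⟩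
  · rw [sup_eq_left.2 h.1]
    exact Or.inr h

theorem IsGlued.le_fst_sup (ht : IsGlued a t) (ht' : IsGlued a t')
    (h : ¬((t ⊔ t').2.1 ≤ a ∧ (t ⊔ t').2.2 ≤ a)) : a ≤ (t ⊔ t').1 := by
  by_contra hn
  have h₁ : ¬a ≤ t.1 := fun h₁ => hn (le_sup_of_le_left h₁)
  have h₂ : ¬a ≤ t'.1 := fun h₂ => hn (le_sup_of_le_right h₂)
  rw [ht.eq_of_not_le h₁, ht'.eq_of_not_le h₂] at h
  simp at h

open Classical in
noncomputable def glue (a : L) (t : L × L × L) : L × L × L :=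
  if t.2.1 ≤ a ∧ t.2.2 ≤ a then (t.1, a, a) else boolClosure (t ⊔ (a, a, a))

theorem glue_of_le (h : t.2.1 ≤ a ∧ t.2.2 ≤ a) : glue a t = (t.1, a, a) := if_pos h

theorem glue_of_not_le (h : ¬(t.2.1 ≤ a ∧ t.2.2 ≤ a)) :
    glue a t = boolClosure (t ⊔ (a, a, a)) :=
  if_neg h

@[simp]
theorem glue_eq_boolClosure (h₁ : a ≤ t.1) (h₂ : a ≤ t.2.1) (h₃ : a ≤ t.2.2) :
    glue a t = boolClosure t := by
  by_cases h : t.2.1 ≤ a ∧ t.2.2 ≤ a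
  · obtain ⟨x, y, z⟩ := t
    obtain rfl : y = a := le_antisymm h.1 h₂
    obtain rfl : z = y := le_antisymm h.2 h₃
    simp_all [glue_of_le]
  · rw [glue_of_not_le h, sup_eq_left.2 (show (a, a, a) ≤ t from ⟨h₁, h₂, h₃⟩)]

theorem le_glue (a : L) (t : L × L × L) : t ≤ glue a t := by
  by_cases h : t.2.1 ≤ a ∧ t.2.2 ≤ a
  · rw [glue_of_le h]
    exact ⟨le_rfl, h⟩
  · rw [glue_of_not_le h]
    exact le_sup_left.trans (boolClosure.le_closure _)

theorem isGlued_glue (a : L) (t : L × L × L) : IsGlued a (glue a t) := by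
  by_cases h : t.2.1 ≤ a ∧ t.2.2 ≤ a
  · rw [glue_of_le h]
    exact Or.inl ⟨rfl, rfl⟩
  · rw [glue_of_not_le h]
    exact Or.inr ⟨le_sup_right.trans (boolClosure.le_closure _), boolClosure.isClosed_closure _⟩

theorem glue_le (htt' : t ≤ t') (ht' : IsGlued a t') : glue a t ≤ t' := by
  by_cases h : t.2.1 ≤ a ∧ t.2.2 ≤ a
  · rw [glue_of_le h]
    exact ⟨htt'.1, ht'.le_snd, ht'.le_thd⟩
  · rw [glue_of_not_le h]
    rcases ht' with ht' | ht'
    · exact absurd ⟨ht'.1 ▸ htt'.2.1, ht'.2 ▸ htt'.2.2⟩ h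
    · exact boolClosure.closure_min (sup_le htt' ht'.1) ht'.2

variable (a) in
noncomputable def glueClosure : ClosureOperator (L × L × L) :=
  .ofPred (glue a) (IsGlued a) (le_glue a) (isGlued_glue a) fun _ _ => glue_le

theorem IsLatticeCongruence.triRel_glue (hΘ : IsLatticeCongruence Θ) (h : triRel Θ t t')
    (ht : ¬(t.2.1 ≤ a ∧ t.2.2 ≤ a) → a ≤ t.1) (ht' : ¬(t'.2.1 ≤ a ∧ t'.2.2 ≤ a) → a ≤ t'.1) :
    triRel Θ (glue a t) (glue a t') := by
  have hT := isLatticeCongruence_triRel hΘ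
  have near : ∀ t : L × L × L, Θ t.1 (t.1 ⊔ a) →
      triRel Θ (glue a t) (boolClosure (t ⊔ (a, a, a))) := by
    intro t h₁
    by_cases hc : t.2.1 ≤ a ∧ t.2.2 ≤ a
    · obtain ⟨x, y, z⟩ := t
      rw [glue_of_le hc]
      have : boolClosure ((x, y, z) ⊔ (a, a, a)) = (x ⊔ a, a, a) := by
        simp [sup_of_le_right hc.1, sup_of_le_right hc.2]
      exact this ▸ ⟨h₁, hΘ.refl a, hΘ.refl a⟩
    · rw [glue_of_not_le hc]
      exact hT.refl _
  by_cases hc : (t.2.1 ≤ a ∧ t.2.2 ≤ a) ∧ (t'.2.1 ≤ a ∧ t'.2.2 ≤ a)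
  · rw [glue_of_le hc.1, glue_of_le hc.2]
    exact ⟨h.1, hΘ.refl a, hΘ.refl a⟩
  obtain ⟨b, hab, htb, ht'b⟩ : ∃ b, a ≤ b ∧ Θ t.1 b ∧ Θ t'.1 b := by
    rcases not_and_or.1 hc with hc | hc
    · exact ⟨t.1, ht hc, hΘ.refl _, hΘ.symm h.1⟩
    · exact ⟨t'.1, ht' hc, h.1, hΘ.refl _⟩
  exact hT.trans (near t (hΘ.sup_right_of_le htb hab)) <|
    hT.trans (hΘ.triRel_boolClosure (hT.sup_s14 h (hT.refl _)))
      (hT.symm (near t' (hΘ.sup_right_of_le ht'b hab)))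

abbrev GluedM3 (a : L) : Type _ := (glueClosure a).Closeds

end Glue

namespace GluedM3

variable {L : Type*} [Lattice L] {a : L} {Θ : L → L → Prop}

noncomputable instance : Lattice (GluedM3 a) := (glueClosure a).gi.liftLattice

theorem coe_sup (u v : GluedM3 a) : ((u ⊔ v : GluedM3 a) : L × L × L) = glue a (u ⊔ v) := rfl

variable (a) in
noncomputable def mk (t : L × L × L) : GluedM3 a := (glueClosure a).toCloseds t

@[simp]
theorem coe_mk (t : L × L × L) : (mk a t : L × L × L) = glue a t := rfl

theorem mk_sup (t t' : L × L × L) : mk a (t ⊔ t') = mk a t ⊔ mk a t' :=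
  (glueClosure a).gi.gc.l_sup

theorem mk_coe (u : GluedM3 a) : mk a u = u := (glueClosure a).gi.l_u_eq u

variable (a) in
def embed (x : L) : GluedM3 a := ⟨(x, a, a), Or.inl ⟨rfl, rfl⟩⟩

@[simp]
theorem coe_embed (x : L) : (embed a x : L × L × L) = (x, a, a) := rfl

theorem embed_eq_mk (x : L) : embed a x = mk a (x, a, a) := (mk_coe (embed a x)).symm

theorem embed_injective : Function.Injective (embed a) :=
  fun _ _ h => congrArg (fun u : GluedM3 a => u.val.1) h

theorem embed_sup (x y : L) : embed a (x ⊔ y) = embed a x ⊔ embed a y :=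
  Subtype.ext (by simp [coe_sup, glue_of_le])

theorem embed_inf (x y : L) : embed a (x ⊓ y) = embed a x ⊓ embed a y :=
  Subtype.ext (by rw [inf_idem] : (x ⊓ y, a, a) = (x ⊓ y, a ⊓ a, a ⊓ a))

theorem isLowerSet_range_embed : IsLowerSet (Set.range (embed a)) := by
  rintro _ u hu ⟨x, rfl⟩
  exact ⟨u.val.1, Subtype.ext (Prod.ext rfl
    (Prod.ext (le_antisymm hu.2.1 u.2.le_snd).symm (le_antisymm hu.2.2 u.2.le_thd).symm))⟩

theorem eq_embed_of_not_le {u : GluedM3 a} (hu : ¬a ≤ u.val.1) : u = embed a u.val.1 :=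
  Subtype.ext (u.2.eq_of_not_le hu)

variable (a) in
noncomputable def axis₂ (s : L) : GluedM3 a := mk a (a, s, a)

variable (a) in
noncomputable def axis₃ (s : L) : GluedM3 a := mk a (a, a, s)

@[simp]
theorem coe_axis₂ {s : L} (hs : a ≤ s) : (axis₂ a s : L × L × L) = (a, s, a) := by
  simp [axis₂, hs]

@[simp]
theorem coe_axis₃ {s : L} (hs : a ≤ s) : (axis₃ a s : L × L × L) = (a, a, s) := by
  simp [axis₃, hs]

theorem axis₂_sup (s t : L) : axis₂ a (s ⊔ t) = axis₂ a s ⊔ axis₂ a t := by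
  rw [axis₂, axis₂, axis₂, ← mk_sup]
  simp

theorem not_surjective_embed {b : L} (hab : a < b) : ¬Function.Surjective (embed a) := by
  intro hs
  obtain ⟨x, hx⟩ := hs (axis₂ a b)
  exact hab.ne (by simpa [hab.le] using congrArg (fun u : GluedM3 a => u.val.2.1) hx)

theorem coe_sup_embed_self (u : GluedM3 a) :
    ((u ⊔ embed a a : GluedM3 a) : L × L × L) = (u : L × L × L) ⊔ (a, a, a) :=
  (show (glueClosure a).IsClosed _ from u.2.sup_diag).closure_eq

theorem sup_embed_self_of_le {u : GluedM3 a} (hu : a ≤ u.val.1) : u ⊔ embed a a = u :=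
  Subtype.ext <| (coe_sup_embed_self u).trans
    (sup_eq_left.2 (show (a, a, a) ≤ u.val from ⟨hu, u.2.le_snd, u.2.le_thd⟩))

theorem sup_embed_self_eq (u : GluedM3 a) :
    u ⊔ embed a a = embed a u.val.1 ⊔ axis₂ a u.val.2.1 ⊔ axis₃ a u.val.2.2 := by
  calc u ⊔ embed a a = mk a ((u : L × L × L) ⊔ (a, a, a)) := by
        rw [mk_sup, mk_coe, embed_eq_mk]
    _ = mk a ((u.val.1, a, a) ⊔ (a, u.val.2.1, a) ⊔ (a, a, u.val.2.2)) := by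
      congr 1
      ext <;> simp [u.2.le_snd, u.2.le_thd]
    _ = _ := by rw [mk_sup, mk_sup, embed_eq_mk, axis₂, axis₃]

theorem inf_embed_of_le {u : GluedM3 a} {m : L} (h : u.val.1 ≤ m) :
    u ⊓ embed a m = embed a u.val.1 :=
  Subtype.ext (by
    show (u.val.1 ⊓ m, u.val.2.1 ⊓ a, u.val.2.2 ⊓ a) = (u.val.1, a, a)
    rw [inf_of_le_left h, inf_of_le_right u.2.le_snd, inf_of_le_right u.2.le_thd])

theorem sup_embed_self_inf_axis₂ {u : GluedM3 a} {m : L} (h : u.val.2.1 ≤ m) :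
    (u ⊔ embed a a) ⊓ axis₂ a m = axis₂ a u.val.2.1 := by
  have hu := u.2.le_snd
  apply Subtype.ext
  show ((u ⊔ embed a a : GluedM3 a) : L × L × L) ⊓ (axis₂ a m : L × L × L) = _
  rw [coe_sup_embed_self, coe_axis₂ (hu.trans h), coe_axis₂ hu]
  ext <;> simp [hu, h]

variable (a) in
def swap : GluedM3 a ≃o GluedM3 a where
  toFun u := ⟨(u.val.1, u.val.2.swap), u.2.swap⟩
  invFun u := ⟨(u.val.1, u.val.2.swap), u.2.swap⟩
  left_inv _ := rfl
  right_inv _ := rfl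
  map_rel_iff' := ⟨fun h => ⟨h.1, h.2.2, h.2.1⟩, fun h => ⟨h.1, h.2.2, h.2.1⟩⟩

@[simp]
theorem coe_swap (u : GluedM3 a) : (swap a u : L × L × L) = (u.val.1, u.val.2.swap) := rfl

theorem swap_embed (x : L) : swap a (embed a x) = embed a x := rfl

theorem swap_axis₂ {s : L} (hs : a ≤ s) : swap a (axis₂ a s) = axis₃ a s :=
  Subtype.ext (by simp [hs])

variable (a) in
def liftCong (Θ : L → L → Prop) (u v : GluedM3 a) : Prop := triRel Θ u v

theorem isLatticeCongruence_liftCong (hΘ : IsLatticeCongruence Θ) :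
    IsLatticeCongruence (liftCong a Θ) :=
  have hT := isLatticeCongruence_triRel hΘ
  ⟨hT.1.comap Subtype.val, fun u v u' v' h h' =>
    ⟨hΘ.triRel_glue (hT.sup_s14 h h') (u.2.le_fst_sup u'.2) (v.2.le_fst_sup v'.2), hT.inf_s14 h h'⟩⟩

theorem liftCong_embed_iff (hΘ : IsLatticeCongruence Θ) {x y : L} :
    liftCong a Θ (embed a x) (embed a y) ↔ Θ x y :=
  ⟨And.left, fun h => ⟨h, hΘ.refl a, hΘ.refl a⟩⟩

variable {Φ : GluedM3 a → GluedM3 a → Prop}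

theorem cong_embed_iff_cong_axis₂ (hΦ : IsLatticeCongruence Φ) {s t : L} (hs : a ≤ s)
    (ht : a ≤ t) : Φ (embed a s) (embed a t) ↔ Φ (axis₂ a s) (axis₂ a t) := by
  have comparable : ∀ {s t : L}, a ≤ s → s ≤ t →
      (Φ (embed a s) (embed a t) ↔ Φ (axis₂ a s) (axis₂ a t)) := by
    intro s t hs hst
    have ht := hs.trans hst
    -- both pairs are perspective to `((s, s, t), (t, t, t))`
    set p := mk a (s, s, t)
    have hp : (p : L × L × L) = (s, s, t) := by simp [p, hs, ht, hst]
    have h₁ : p ⊓ embed a t = embed a s := Subtype.ext (by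
      show (p : L × L × L) ⊓ (t, a, a) = (s, a, a)
      simp [hp, hs, ht, hst])
    have h₂ : p ⊓ axis₂ a t = axis₂ a s := Subtype.ext (by
      show (p : L × L × L) ⊓ (axis₂ a t : L × L × L) = _
      simp [hp, hs, ht, hst])
    have h₃ : p ⊔ embed a t = p ⊔ axis₂ a t := Subtype.ext (by
      simp [coe_sup, hp, hs, ht, hst])
    rw [hΦ.iff_of_inf_eq h₁, hΦ.iff_of_inf_eq h₂, h₃]
  rw [hΦ.iff_sup, hΦ.iff_sup (x := axis₂ a s), ← embed_sup, ← axis₂_sup,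
    comparable hs le_sup_left, comparable ht le_sup_right]

theorem cong_embed_iff_cong_axis₃ (hΦ : IsLatticeCongruence Φ) {s t : L} (hs : a ≤ s)
    (ht : a ≤ t) : Φ (embed a s) (embed a t) ↔ Φ (axis₃ a s) (axis₃ a t) := by
  simpa only [swap_embed, swap_axis₂ hs, swap_axis₂ ht] using
    cong_embed_iff_cong_axis₂ (hΦ.comap (swap a)) hs ht

section Extension

variable (hΦ : IsLatticeCongruence Φ) (hres : ∀ x y, Φ (embed a x) (embed a y) ↔ Θ x y)
include hΦ hres

theorem rel_fst_of_cong {u v : GluedM3 a} (h : Φ u v) : Θ u.val.1 v.val.1 := by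
  have := hΦ.inf_s14 h (hΦ.refl (embed a (u.val.1 ⊔ v.val.1)))
  rwa [inf_embed_of_le le_sup_left, inf_embed_of_le le_sup_right, hres] at this

theorem rel_snd_of_cong {u v : GluedM3 a} (h : Φ u v) : Θ u.val.2.1 v.val.2.1 := by
  have := hΦ.inf_s14 (hΦ.sup_s14 h (hΦ.refl (embed a a))) (hΦ.refl (axis₂ a (u.val.2.1 ⊔ v.val.2.1)))
  rwa [sup_embed_self_inf_axis₂ le_sup_left, sup_embed_self_inf_axis₂ le_sup_right,
    ← cong_embed_iff_cong_axis₂ hΦ u.2.le_snd v.2.le_snd, hres] at this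

theorem rel_thd_of_cong {u v : GluedM3 a} (h : Φ u v) : Θ u.val.2.2 v.val.2.2 :=
  rel_snd_of_cong (hΦ.comap (swap a)) (by simpa only [swap_embed] using hres)
    (u := swap a u) (v := swap a v) h

theorem liftCong_of_cong {u v : GluedM3 a} (h : Φ u v) : liftCong a Θ u v :=
  ⟨rel_fst_of_cong hΦ hres h, rel_snd_of_cong hΦ hres h, rel_thd_of_cong hΦ hres h⟩

theorem cong_sup_embed_self {u v : GluedM3 a} (h : liftCong a Θ u v) :
    Φ (u ⊔ embed a a) (v ⊔ embed a a) := by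
  rw [sup_embed_self_eq u, sup_embed_self_eq v]
  refine hΦ.sup_s14 (hΦ.sup_s14 ((hres _ _).2 h.1) ?_) ?_
  · exact (cong_embed_iff_cong_axis₂ hΦ u.2.le_snd v.2.le_snd).1 ((hres _ _).2 h.2.1)
  · exact (cong_embed_iff_cong_axis₃ hΦ u.2.le_thd v.2.le_thd).1 ((hres _ _).2 h.2.2)

theorem cong_self_sup_embed (hΘ : IsLatticeCongruence Θ) {u v : GluedM3 a}
    (h : liftCong a Θ u v) (huv : a ≤ u.val.1 ∨ a ≤ v.val.1) : Φ u (u ⊔ embed a a) := by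
  by_cases hu : a ≤ u.val.1
  · rw [sup_embed_self_of_le hu]
    exact hΦ.refl u
  · rw [eq_embed_of_not_le hu, ← embed_sup]
    exact (hres _ _).2 (hΘ.sup_right_of_le h.1 (huv.resolve_left hu))

theorem cong_of_liftCong (hΘ : IsLatticeCongruence Θ) {u v : GluedM3 a}
    (h : liftCong a Θ u v) : Φ u v := by
  by_cases huv : a ≤ u.val.1 ∨ a ≤ v.val.1
  · have h' := (isLatticeCongruence_liftCong hΘ).symm h
    exact hΦ.trans (cong_self_sup_embed hΦ hres hΘ h huv) <|
      hΦ.trans (cong_sup_embed_self hΦ hres h)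
        (hΦ.symm (cong_self_sup_embed hΦ hres hΘ h' huv.symm))
  · obtain ⟨hu, hv⟩ := not_or.1 huv
    rw [eq_embed_of_not_le hu, eq_embed_of_not_le hv, hres]
    exact h.1

theorem eq_liftCong (hΘ : IsLatticeCongruence Θ) : Φ = liftCong a Θ :=
  funext₂ fun _ _ => propext ⟨liftCong_of_cong hΦ hres, cong_of_liftCong hΦ hres hΘ⟩

end Extension

theorem existsUnique_congruence_extension (hΘ : IsLatticeCongruence Θ) :
    ∃! Φ : GluedM3 a → GluedM3 a → Prop,
      IsLatticeCongruence Φ ∧ ∀ x y, Φ (embed a x) (embed a y) ↔ Θ x y :=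
  ⟨liftCong a Θ, ⟨isLatticeCongruence_liftCong hΘ, fun _ _ => liftCong_embed_iff hΘ⟩,
    fun _ hΦ => eq_liftCong hΦ.1 hΦ.2 hΘ⟩

end GluedM3

/-- Every lattice with more than one element has a proper congruence-preserving
extension in which it is an ideal: the image of the embedding is a nonempty
downward-closed subset closed under binary joins. -/
theorem proper_congruence_preserving_extension_as_ideal
    (L : Type u) [Lattice L] [Nontrivial L] :
    ∃ (K : Type u) (_ : Lattice K) (f : L → K),
      Function.Injective f ∧
      (∀ x y : L, f (x ⊔ y) = f x ⊔ f y) ∧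
      (∀ x y : L, f (x ⊓ y) = f x ⊓ f y) ∧
      ¬ Function.Surjective f ∧
      (∀ Θ : L → L → Prop, IsLatticeCongruence Θ →
        ∃! Φ : K → K → Prop,
          IsLatticeCongruence Φ ∧ ∀ x y : L, Φ (f x) (f y) ↔ Θ x y) ∧
      (Set.range f).Nonempty ∧
      IsLowerSet (Set.range f) ∧
      ∀ a ∈ Set.range f, ∀ b ∈ Set.range f, a ⊔ b ∈ Set.range f := by
  obtain ⟨x, y, hxy⟩ := exists_pair_ne L
  open GluedM3 in
  refine ⟨GluedM3 (x ⊓ y), inferInstance, embed _, embed_injective, embed_sup, embed_inf,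
    not_surjective_embed (inf_lt_sup.2 hxy), fun _ => existsUnique_congruence_extension,
    Set.range_nonempty _, isLowerSet_range_embed, ?_⟩
  rintro _ ⟨p, rfl⟩ _ ⟨q, rfl⟩
  exact ⟨p ⊔ q, embed_sup p q⟩
end
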